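/- Let p be a prime, e ≥ 1 an integer, and R a commutative ring of characteristic p such that F^e_*R (that is, R viewed as a module over itself via r • x = r^{p^e}·x) is a finitely generated free R-module and such that there exists a p^{-e}-linear map φ on R with φ(1) = 1. Let 𝔞 be a nonzero finitely generated ideal of R. Then a natural number n is a ν-invariant of level e for 𝔞 if and only if C^e·𝔞^n ≠ C^e·𝔞^{n+1}. (Proposition 4.1.) -/

import Mathlib

/-- A `p^{-e}`-linear map on `R`: an additive map `φ : R → R` with
`φ (r^{p^e} * x) = r * φ x`. -/
def IsCartierLinear (p e : ℕ) {R : Type*} [CommRing R] (φ : R →+ R) : Prop :=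
  ∀ r x : R, φ (r ^ p ^ e * x) = r * φ x

/-- `C^e · I`: the ideal generated by all `φ x` with `φ` a `p^{-e}`-linear map and `x ∈ I`. -/
def cartierIdeal (p e : ℕ) {R : Type*} [CommRing R] (I : Ideal R) : Ideal R :=
  Ideal.span {y | ∃ φ : R →+ R, IsCartierLinear p e φ ∧ ∃ x ∈ I, φ x = y}

/-- `J^{[q]}`: the ideal generated by `q`-th powers of elements of `J`. -/
def bracketPower {R : Type*} [CommRing R] (J : Ideal R) (q : ℕ) : Ideal R :=
  Ideal.span ((fun x => x ^ q) '' (J : Set R))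

/-- `n` is a ν-invariant of level `e` for `𝔞`: there is a proper ideal `J` whose radical
contains `𝔞` such that `n` is the largest natural number with `𝔞^n ⊄ J^{[p^e]}`. -/
def IsNuInvariant (p e : ℕ) {R : Type*} [CommRing R] (𝔞 : Ideal R) (n : ℕ) : Prop :=
  ∃ J : Ideal R, J ≠ ⊤ ∧ 𝔞 ≤ J.radical ∧ ¬ 𝔞 ^ n ≤ bracketPower J (p ^ e) ∧
    ∀ m : ℕ, ¬ 𝔞 ^ m ≤ bracketPower J (p ^ e) → m ≤ n

/-!
Under the freeness hypothesis the coordinate functions of `F^e_* R` are `p^{-e}`-linear, which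
makes `C^e` left adjoint to `J ↦ J^{[p^e]}`: `C^e · I ≤ J ↔ I ≤ J^{[p^e]}`. Hence `𝔞^m ⊄ J^{[p^e]}`
means `C^e · 𝔞^m ⊄ J`, and as the chain `C^e · 𝔞^m` decreases in `m`, `n` is a ν-invariant
exactly when the chain drops at `n`; the witness is `J = C^e · 𝔞^{n+1}`, which contains `𝔞^{n+1}`
because a splitting `φ` gives `a = φ (a^{p^e})`.
-/

section Cartier

variable {R : Type*} [CommRing R]

lemma bracketPower_mono {J J' : Ideal R} (h : J ≤ J') (q : ℕ) :
    bracketPower J q ≤ bracketPower J' q :=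
  Ideal.span_mono (Set.image_mono h)

lemma mem_cartierIdeal {p e : ℕ} {φ : R →+ R} (hφ : IsCartierLinear p e φ) {I : Ideal R}
    {x : R} (hx : x ∈ I) : φ x ∈ cartierIdeal p e I :=
  Ideal.subset_span ⟨φ, hφ, x, hx, rfl⟩

lemma cartierIdeal_mono (p e : ℕ) : Monotone (cartierIdeal (R := R) p e) := by
  intro I I' h
  apply Ideal.span_mono
  rintro y ⟨φ, hφ, x, hx, rfl⟩
  exact ⟨φ, hφ, x, h hx, rfl⟩

lemma cartierIdeal_pow_antitone (p e : ℕ) (𝔞 : Ideal R) :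
    Antitone fun m => cartierIdeal p e (𝔞 ^ m) :=
  fun _ _ h => cartierIdeal_mono p e (Ideal.pow_le_pow_right h)

lemma cartierIdeal_le_of_le_bracketPower (p e : ℕ) {I J : Ideal R}
    (h : I ≤ bracketPower J (p ^ e)) : cartierIdeal p e I ≤ J := by
  rw [cartierIdeal, Ideal.span_le]
  rintro _ ⟨φ, hφ, x, hx, rfl⟩
  obtain ⟨m, f, g, rfl⟩ := Submodule.mem_span_set'.mp (h hx)
  rw [map_sum]
  refine Ideal.sum_mem _ fun i _ => ?_
  obtain ⟨z, hz, hzg⟩ := (g i).2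
  rw [smul_eq_mul, ← hzg, mul_comm, hφ]
  exact Ideal.mul_mem_right _ _ hz

lemma le_cartierIdeal_of_isCartierLinear {p e : ℕ} [ExpChar R p] {φ : R →+ R}
    (hφ : IsCartierLinear p e φ) (hφ1 : φ 1 = 1) (I : Ideal R) : I ≤ cartierIdeal p e I := by
  intro a ha
  have hq : 0 < p ^ e := pow_pos (expChar_pos R p) e
  have : φ (a ^ p ^ e) = a := by simpa [hφ1] using hφ a 1
  exact this ▸ mem_cartierIdeal hφ (I.pow_mem_of_mem ha _ hq)

lemma exists_isCartierLinear_coordinates (p e : ℕ) [ExpChar R p]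
    (hfree : ∃ n : ℕ, ∃ b : Fin n → R, ∀ x : R, ∃! c : Fin n → R,
      x = ∑ i, c i ^ p ^ e * b i) :
    ∃ n : ℕ, ∃ b : Fin n → R, ∃ φ : Fin n → R →+ R,
      (∀ i, IsCartierLinear p e (φ i)) ∧ ∀ x, x = ∑ i, φ i x ^ p ^ e * b i := by
  obtain ⟨n, b, hb⟩ := hfree
  choose c hc huniq using hb
  have hadd (x y : R) : c (x + y) = c x + c y := by
    refine (huniq _ _ ?_).symm
    simp only [Pi.add_apply, add_pow_expChar_pow, add_mul, Finset.sum_add_distrib, ← hc]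
  have hsmul (r x : R) : c (r ^ p ^ e * x) = r • c x := by
    refine (huniq _ _ ?_).symm
    simp only [Pi.smul_apply, smul_eq_mul, mul_pow, mul_assoc, ← Finset.mul_sum, ← hc]
  refine ⟨n, b, fun i => AddMonoidHom.mk' (c · i) fun x y => congrFun (hadd x y) i,
    fun i r x => congrFun (hsmul r x) i, hc⟩

lemma le_bracketPower_cartierIdeal (p e : ℕ) [ExpChar R p]
    (hfree : ∃ n : ℕ, ∃ b : Fin n → R, ∀ x : R, ∃! c : Fin n → R,
      x = ∑ i, c i ^ p ^ e * b i) (I : Ideal R) :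
    I ≤ bracketPower (cartierIdeal p e I) (p ^ e) := by
  obtain ⟨n, b, φ, hφ, hx⟩ := exists_isCartierLinear_coordinates p e hfree
  intro x hxI
  rw [hx x]
  refine Ideal.sum_mem _ fun i _ => Ideal.mul_mem_right _ _ (Ideal.subset_span ?_)
  exact ⟨φ i x, mem_cartierIdeal (hφ i) hxI, rfl⟩

lemma cartierIdeal_le_iff (p e : ℕ) [ExpChar R p]
    (hfree : ∃ n : ℕ, ∃ b : Fin n → R, ∀ x : R, ∃! c : Fin n → R,
      x = ∑ i, c i ^ p ^ e * b i) {I J : Ideal R} :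
    cartierIdeal p e I ≤ J ↔ I ≤ bracketPower J (p ^ e) :=
  ⟨fun h => (le_bracketPower_cartierIdeal p e hfree I).trans (bracketPower_mono h _),
    cartierIdeal_le_of_le_bracketPower p e⟩

end Cartier

theorem isNuInvariant_iff_general (p : ℕ) (hp : p.Prime)
    (e : ℕ) (R : Type*) [CommRing R] [CharP R p]
    (hfree : ∃ n : ℕ, ∃ b : Fin n → R, ∀ x : R, ∃! c : Fin n → R,
      x = ∑ i, c i ^ p ^ e * b i)
    (hsplit : ∃ φ : R →+ R, IsCartierLinear p e φ ∧ φ 1 = 1)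
    (𝔞 : Ideal R) (n : ℕ) :
    IsNuInvariant p e 𝔞 n ↔ cartierIdeal p e (𝔞 ^ n) ≠ cartierIdeal p e (𝔞 ^ (n + 1)) := by
  have : Fact p.Prime := ⟨hp⟩
  have hanti := cartierIdeal_pow_antitone p e 𝔞
  have hdrop : cartierIdeal p e (𝔞 ^ n) ≠ cartierIdeal p e (𝔞 ^ (n + 1)) ↔
      ¬ cartierIdeal p e (𝔞 ^ n) ≤ cartierIdeal p e (𝔞 ^ (n + 1)) :=
    ⟨fun h h' => h (h'.antisymm (hanti n.le_succ)), fun h h' => h h'.le⟩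
  simp only [IsNuInvariant, ← cartierIdeal_le_iff p e hfree, hdrop]
  constructor
  · rintro ⟨J, -, -, hn, hmax⟩ hle
    have hJ : cartierIdeal p e (𝔞 ^ (n + 1)) ≤ J :=
      by_contra fun h => n.not_succ_le_self (hmax _ h)
    exact hn (hle.trans hJ)
  · intro hn
    obtain ⟨φ, hφ, hφ1⟩ := hsplit
    refine ⟨cartierIdeal p e (𝔞 ^ (n + 1)), fun htop => hn (htop ▸ le_top),
      fun a ha => ⟨n + 1, ?_⟩, hn, fun m hm => ?_⟩
    · exact le_cartierIdeal_of_isCartierLinear hφ hφ1 _ (Ideal.pow_mem_pow ha _)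
    · by_contra! hlt
      exact hm (hanti hlt)

/-- Proposition 4.1: `n` is a ν-invariant of level `e` for `𝔞` iff
`C^e · 𝔞^n ≠ C^e · 𝔞^{n+1}`. -/
theorem isNuInvariant_iff (p : ℕ) (hp : p.Prime)
    (e : ℕ) (he : 1 ≤ e) (R : Type*) [CommRing R] [CharP R p]
    (hfree : ∃ n : ℕ, ∃ b : Fin n → R, ∀ x : R, ∃! c : Fin n → R,
      x = ∑ i, c i ^ p ^ e * b i)
    (hsplit : ∃ φ : R →+ R, IsCartierLinear p e φ ∧ φ 1 = 1)
    (𝔞 : Ideal R) (h𝔞ne : 𝔞 ≠ 0) (h𝔞fg : 𝔞.FG) (n : ℕ) :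
    IsNuInvariant p e 𝔞 n ↔ cartierIdeal p e (𝔞 ^ n) ≠ cartierIdeal p e (𝔞 ^ (n + 1)) :=
  isNuInvariant_iff_general p hp e R hfree hsplit 𝔞 n
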